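/- Viewed as a polynomial in the parameter a (with coefficients in ℝ[x]), the elephant polynomial R_n has degree n − 1 in a, for every n ≥ 1. -/

import Mathlib

/-! The recursion raises the `a`-degree by at most one, and on the top `x`-coefficient it acts as
multiplication by `1 + a`, since `x·xⁿ = xⁿ⁺¹` and `(a/n)·x²·∂ₓxⁿ = a·xⁿ⁺¹`.
Hence the `xⁿ`-coefficient of `Rₙ` is `(1 + a)ⁿ⁻¹` and no coefficient has larger `a`-degree. -/

open Polynomial

/-- The elephant polynomials as elements of `(ℝ[a])[x]`: the outer variable is `x`,
the inner variable is the parameter `a` (so `a` is `C X`), and the factor `a/n`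
is the inner polynomial `(1/n) * X`. -/
noncomputable def elephantR2 : ℕ → Polynomial (Polynomial ℝ)
  | 0 => 1
  | 1 => X
  | n + 2 => X * elephantR2 (n + 1) -
      C (Polynomial.C (((n : ℝ) + 1))⁻¹ * Polynomial.X) *
        ((1 - X ^ 2) * (elephantR2 (n + 1)).derivative)

section InnerDegree

variable {R : Type*}

theorem degree_coeff_mul_le [Semiring R] {P Q : R[X][X]} {d e : ℕ}
    (hP : ∀ i, (P.coeff i).degree ≤ d) (hQ : ∀ i, (Q.coeff i).degree ≤ e) (i : ℕ) :
    ((P * Q).coeff i).degree ≤ (d + e : ℕ) := by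
  rw [coeff_mul, Nat.cast_add]
  refine (degree_sum_le _ _).trans (Finset.sup_le fun x _ => ?_)
  exact (degree_mul_le _ _).trans (add_le_add (hP _) (hQ _))

theorem degree_coeff_sub_le [Ring R] {P Q : R[X][X]} {d : ℕ}
    (hP : ∀ i, (P.coeff i).degree ≤ d) (hQ : ∀ i, (Q.coeff i).degree ≤ d) (i : ℕ) :
    ((P - Q).coeff i).degree ≤ d := by
  rw [coeff_sub]
  exact (degree_sub_le _ _).trans (max_le (hP i) (hQ i))

theorem degree_coeff_derivative_le [Semiring R] {P : R[X][X]} {d : ℕ}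
    (hP : ∀ i, (P.coeff i).degree ≤ d) (i : ℕ) :
    ((derivative P).coeff i).degree ≤ d := by
  rw [coeff_derivative, ← Nat.cast_succ, ← C_eq_natCast]
  have hC : (C ((i + 1 : ℕ) : R)).degree ≤ 0 := degree_C_le
  exact (degree_mul_le _ _).trans (by simpa using add_le_add (hP (i + 1)) hC)

theorem degree_coeff_C_le [Semiring R] (p : R[X]) (i : ℕ) :
    ((C p : R[X][X]).coeff i).degree ≤ p.degree := by
  rw [coeff_C]
  split_ifs
  · exact le_rfl
  · exact degree_zero.trans_le bot_le

theorem degree_coeff_X_le [Semiring R] (i : ℕ) : ((X : R[X][X]).coeff i).degree ≤ (0 : ℕ) := by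
  rw [coeff_X]
  split_ifs <;> simp

theorem degree_coeff_one_sub_X_sq_le [Ring R] (i : ℕ) :
    ((1 - X ^ 2 : R[X][X]).coeff i).degree ≤ (0 : ℕ) := by
  rw [coeff_sub, coeff_one, coeff_X_pow]
  split_ifs <;> simp

end InnerDegree

theorem degree_coeff_elephantR2_le (m i : ℕ) :
    ((elephantR2 (m + 1)).coeff i).degree ≤ m := by
  induction m generalizing i with
  | zero => exact degree_coeff_X_le i
  | succ m ih =>
    rw [elephantR2]
    refine degree_coeff_sub_le (fun i => ?_) (fun i => ?_) i
    · exact (degree_coeff_mul_le degree_coeff_X_le ih i).trans (by exact_mod_cast (by omega))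
    · have hC (i : ℕ) : ((C (C ((m : ℝ) + 1)⁻¹ * X)).coeff i).degree ≤ ((1 : ℕ) : WithBot ℕ) :=
        (degree_coeff_C_le _ i).trans (by exact_mod_cast degree_C_mul_X_le _)
      have hrest := degree_coeff_mul_le degree_coeff_one_sub_X_sq_le (degree_coeff_derivative_le ih)
      exact (degree_coeff_mul_le hC hrest i).trans (by exact_mod_cast (by omega))

theorem natDegree_elephantR2_le : ∀ n, (elephantR2 n).natDegree ≤ n
  | 0 => by simp [elephantR2]
  | 1 => natDegree_X_le
  | n + 2 => by
    have hR' : (derivative (elephantR2 (n + 1))).natDegree ≤ n :=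
      (natDegree_derivative_le _).trans (by have := natDegree_elephantR2_le (n + 1); omega)
    have h1X2 : (1 - X ^ 2 : ℝ[X][X]).natDegree ≤ 2 := by compute_degree
    rw [elephantR2]
    refine (natDegree_sub_le_of_le
      (natDegree_mul_le_of_le natDegree_X_le (natDegree_elephantR2_le (n + 1)))
      (natDegree_mul_le_of_le (natDegree_C _).le (natDegree_mul_le_of_le h1X2 hR'))).trans ?_
    omega

theorem coeff_elephantR2_self (m : ℕ) :
    (elephantR2 (m + 1)).coeff (m + 1) = (X + 1) ^ m := by
  induction m with
  | zero => simp [elephantR2]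
  | succ m ih =>
    have hvan : (elephantR2 (m + 1)).coeff (m + 1 + 1 + 1) = 0 :=
      coeff_eq_zero_of_natDegree_lt ((natDegree_elephantR2_le _).trans_lt (by omega))
    have hq : C ((m : ℝ) + 1)⁻¹ * X * ((m : ℝ[X]) + 1) = X := by
      rw [show ((m : ℝ[X]) + 1) = C ((m : ℝ) + 1) by simp, mul_right_comm, ← C_mul,
        inv_mul_cancel₀ (by positivity), C_1, one_mul]
    rw [elephantR2, coeff_sub, coeff_X_mul, coeff_C_mul, sub_mul, one_mul, coeff_sub,
      coeff_X_pow_mul', if_pos (by omega), show m + 1 + 1 - 2 = m by omega, coeff_derivative,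
      coeff_derivative, hvan, ih]
    linear_combination (X + 1) ^ m * hq

theorem stmt_12 (n : ℕ) (hn : 1 ≤ n) :
    (∀ i : ℕ, ((elephantR2 n).coeff i).degree ≤ (n - 1 : ℕ)) ∧
    (∃ i : ℕ, ((elephantR2 n).coeff i).degree = (n - 1 : ℕ)) := by
  obtain ⟨m, rfl⟩ : ∃ m, n = m + 1 := ⟨n - 1, by omega⟩
  rw [Nat.add_sub_cancel]
  refine ⟨degree_coeff_elephantR2_le m, m + 1, ?_⟩
  rw [coeff_elephantR2_self]
  compute_degree!
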